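/- arXiv:1311.5595 — 2 statements merged into one kernel-verified Lean document; each statement's English description precedes it below -/
import Mathlib

section
/- Let λ : ℕ → ℝ with λ_i > 0 for all i, and let a : ℕ → ℝ be such that the series ∑_i |a_i| / λ_i is summable. Then the function t ↦ ∑_i a_i e^{−λ_i t} is integrable on (0, ∞) with respect to Lebesgue measure, and ∫₀^∞ (∑_i a_i e^{−λ_i t}) dt = ∑_i a_i / λ_i. -/
/-!
Each term `a i * exp (-(l i) t)` is integrable on `(0, ∞)` with `L¹` norm `|a i| / l i`, so the
hypothesis says exactly that the series of `L¹` norms converges. By monotone convergence for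
`∫⁻`, the series then converges absolutely almost everywhere to an integrable function, and
dominated convergence lets us integrate term by term: `∫₀^∞ exp (-λ t) dt = 1 / λ`.
-/

open MeasureTheory Set

namespace MeasureTheory

variable {α E ι : Type*} [MeasurableSpace α] {μ : Measure α} [NormedAddCommGroup E]
  {F : ι → α → E}

theorem tsum_lintegral_enorm_ne_top_of_summable_integral_norm
    (hF_int : ∀ i, Integrable (F i) μ) (hF_sum : Summable fun i ↦ ∫ a, ‖F i a‖ ∂μ) :
    ∑' i, ∫⁻ a, ‖F i a‖ₑ ∂μ ≠ ⊤ := by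
  simp_rw [← ofReal_integral_norm_eq_lintegral_enorm (hF_int _)]
  rw [← ENNReal.ofReal_tsum_of_nonneg (fun i ↦ integral_nonneg fun a ↦ norm_nonneg _) hF_sum]
  exact ENNReal.ofReal_ne_top

theorem ae_summable_norm_of_summable_integral_norm [Countable ι]
    (hF_int : ∀ i, Integrable (F i) μ) (hF_sum : Summable fun i ↦ ∫ a, ‖F i a‖ ∂μ) :
    ∀ᵐ a ∂μ, Summable fun i ↦ ‖F i a‖ := by
  have hmeas : ∀ i, AEMeasurable (fun a ↦ ‖F i a‖ₑ) μ := fun i ↦ (hF_int i).1.enorm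
  have hfin := tsum_lintegral_enorm_ne_top_of_summable_integral_norm hF_int hF_sum
  rw [← lintegral_tsum hmeas] at hfin
  filter_upwards [ae_lt_top' (AEMeasurable.tsum hmeas) hfin] with a ha
  exact tsum_enorm_ne_top_iff_summable_norm.1 ha.ne

theorem integrable_tsum_of_summable_integral_norm [Countable ι] [CompleteSpace E]
    (hF_int : ∀ i, Integrable (F i) μ) (hF_sum : Summable fun i ↦ ∫ a, ‖F i a‖ ∂μ) :
    Integrable (fun a ↦ ∑' i, F i a) μ := by
  have hsummable := ae_summable_norm_of_summable_integral_norm hF_int hF_sum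
  have hmeas : AEStronglyMeasurable (fun a ↦ ∑' i, F i a) μ := by
    refine aestronglyMeasurable_of_tendsto_ae Filter.atTop
      (fun s ↦ Finset.aestronglyMeasurable_fun_sum s fun i _ ↦ (hF_int i).1) ?_
    filter_upwards [hsummable] with a ha
    exact ha.of_norm.hasSum
  refine ⟨hmeas, ?_⟩
  calc ∫⁻ a, ‖∑' i, F i a‖ₑ ∂μ
      ≤ ∫⁻ a, ∑' i, ‖F i a‖ₑ ∂μ := lintegral_mono fun a ↦ enorm_tsum_le_tsum_enorm
    _ = ∑' i, ∫⁻ a, ‖F i a‖ₑ ∂μ := lintegral_tsum fun i ↦ (hF_int i).1.enorm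
    _ < ⊤ := (tsum_lintegral_enorm_ne_top_of_summable_integral_norm hF_int hF_sum).lt_top

end MeasureTheory

theorem integral_exp_neg_mul_Ioi_zero {c : ℝ} (hc : 0 < c) :
    ∫ t in Ioi (0 : ℝ), Real.exp (-c * t) = c⁻¹ := by
  rw [integral_exp_mul_Ioi (neg_lt_zero.2 hc), mul_zero, Real.exp_zero, neg_div_neg_eq, one_div]

theorem integral_mul_exp_neg_mul_Ioi_zero (a : ℝ) {c : ℝ} (hc : 0 < c) :
    ∫ t in Ioi (0 : ℝ), a * Real.exp (-c * t) = a / c := by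
  rw [integral_const_mul, integral_exp_neg_mul_Ioi_zero hc, div_eq_mul_inv]

theorem integral_norm_mul_exp_neg_mul_Ioi_zero (a : ℝ) {c : ℝ} (hc : 0 < c) :
    ∫ t in Ioi (0 : ℝ), ‖a * Real.exp (-c * t)‖ = |a| / c := by
  simp_rw [norm_mul, Real.norm_eq_abs, Real.abs_exp]
  exact integral_mul_exp_neg_mul_Ioi_zero |a| hc

theorem gps_kernel_integral_of_heat_kernel
    (l : ℕ → ℝ) (hl : ∀ i, 0 < l i) (a : ℕ → ℝ)
    (hsum : Summable (fun i => |a i| / l i)) :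
    IntegrableOn (fun t : ℝ => ∑' i : ℕ, a i * Real.exp (-(l i) * t)) (Set.Ioi 0) volume ∧
    ∫ t in Set.Ioi (0 : ℝ), (∑' i : ℕ, a i * Real.exp (-(l i) * t))
      = ∑' i : ℕ, a i / l i := by
  have hint : ∀ i, IntegrableOn (fun t ↦ a i * Real.exp (-(l i) * t)) (Ioi 0) :=
    fun i ↦ (exp_neg_integrableOn_Ioi 0 (hl i)).const_mul (a i)
  have hsum_norm : Summable fun i ↦ ∫ t in Ioi (0 : ℝ), ‖a i * Real.exp (-(l i) * t)‖ := by
    simpa only [integral_norm_mul_exp_neg_mul_Ioi_zero _ (hl _)] using hsum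
  refine ⟨integrable_tsum_of_summable_integral_norm hint hsum_norm, ?_⟩
  rw [← integral_tsum_of_summable_integral_norm hint hsum_norm]
  simp only [integral_mul_exp_neg_mul_Ioi_zero _ (hl _)]
end

section
/- Let A, B, C be nonempty types and let D₁ : A → B → ℝ≥0∞, D₂ : B → C → ℝ≥0∞, D₃ : A → C → ℝ≥0∞ be functions such that D₃(a, c) ≤ D₁(a, b) + D₂(b, c) for all a ∈ A, b ∈ B, c ∈ C. Then ⨆_{a} ⨅_{c} D₃(a, c) ≤ (⨆_{a} ⨅_{b} D₁(a, b)) + (⨆_{b} ⨅_{c} D₂(b, c)). -/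
open scoped ENNReal

theorem ENNReal.iInf_le_iInf_add_iSup_iInf {B C : Type*} (f : B → ℝ≥0∞) (g : B → C → ℝ≥0∞)
    (k : C → ℝ≥0∞) (h : ∀ b c, k c ≤ f b + g b c) :
    ⨅ c, k c ≤ (⨅ b, f b) + ⨆ b, ⨅ c, g b c := by
  rw [ENNReal.iInf_add]
  refine le_iInf fun b => ?_
  calc ⨅ c, k c ≤ ⨅ c, (f b + g b c) := iInf_mono (h b)
    _ = f b + ⨅ c, g b c := ENNReal.add_iInf.symm
    _ ≤ f b + ⨆ b', ⨅ c, g b' c := add_le_add_right (le_iSup (fun b' => ⨅ c, g b' c) b) _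

theorem supInf_triangle_general
    {A B C : Type*}
    (D₁ : A → B → ℝ≥0∞) (D₂ : B → C → ℝ≥0∞) (D₃ : A → C → ℝ≥0∞)
    (h : ∀ a b c, D₃ a c ≤ D₁ a b + D₂ b c) :
    (⨆ a, ⨅ c, D₃ a c) ≤ (⨆ a, ⨅ b, D₁ a b) + (⨆ b, ⨅ c, D₂ b c) :=
  iSup_le fun a => (ENNReal.iInf_le_iInf_add_iSup_iInf (D₁ a) D₂ (D₃ a) (h a)).trans <|
    add_le_add_left (le_iSup (fun a => ⨅ b, D₁ a b) a) _

theorem supInf_triangle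
    {A B C : Type*} [Nonempty A] [Nonempty B] [Nonempty C]
    (D₁ : A → B → ℝ≥0∞) (D₂ : B → C → ℝ≥0∞) (D₃ : A → C → ℝ≥0∞)
    (h : ∀ a b c, D₃ a c ≤ D₁ a b + D₂ b c) :
    (⨆ a, ⨅ c, D₃ a c) ≤ (⨆ a, ⨅ b, D₁ a b) + (⨆ b, ⨅ c, D₂ b c) :=
  supInf_triangle_general D₁ D₂ D₃ h
end
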